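/- arXiv:2406.06897 — 3 statements merged into one kernel-verified Lean document; each statement's English description precedes it below -/
import Mathlib

section
/- Let x* be an equilibrium of the Lotka-Volterra system dx/dt = X(1 + Bx) with extinct set 𝒥, i.e., x*ⱼ = 0 for j ∈ 𝒥 and (1 + Bx*)ⱼ = 0 for j ∉ 𝒥. Then the determinant of the Jacobian Df at x* factorizes as det(Df|_{x*}) = ∏_{i∈𝒥} (1 + Σ_ℓ B_{iℓ} x*_ℓ) · ∏_{i∉𝒥} x*_i · det(B⁺), where B⁺ is the principal submatrix of B on the complement of 𝒥. -/
open Matrix BigOperators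

/-!
Reorder the coordinates so that the extinct species `𝒥` come first. The rows indexed by `𝒥`
of `diag(1 + Bx*) + diag(x*) B` reduce to their diagonal entries because `x*` vanishes there,
and on the complement `1 + Bx*` vanishes, leaving `diag(x*) B⁺`. The Jacobian is therefore block
triangular with diagonal blocks `diag(1 + Bx*)|_𝒥` and `diag(x*|_{𝒥ᶜ}) B⁺`.
-/

namespace Matrix

variable {n R : Type*} [Fintype n] [DecidableEq n] [CommRing R]

theorem det_diagonal_add_diagonal_mul_of_zero_on (d x : n → R) (B : Matrix n n R)
    (S : Finset n) (hx : ∀ i ∈ S, x i = 0) (hd : ∀ i ∉ S, d i = 0) :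
    (diagonal d + diagonal x * B).det =
      (∏ i ∈ S, d i) * (∏ i ∈ Sᶜ, x i) *
        (B.submatrix (Subtype.val : {i // i ∉ S} → n) Subtype.val).det := by
  set M := diagonal d + diagonal x * B
  have hM : ∀ i j, M i j = diagonal d i j + x i * B i j := fun i j => by
    simp only [M, add_apply, diagonal_mul]
  have hM_triangular : ∀ i ∈ S, ∀ j ∉ S, M i j = 0 := fun i hi j hj => by
    rw [hM, diagonal_apply_ne _ (ne_of_mem_of_not_mem hi hj), hx i hi, zero_mul, add_zero]
  have hS : (toSquareBlockProp M (· ∈ S)).det = ∏ i ∈ S, d i := by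
    have hdiag : toSquareBlockProp M (· ∈ S) = diagonal fun i : {i // i ∈ S} => d i := by
      ext i j
      rw [toSquareBlockProp_def, of_apply, hM, hx _ i.2, zero_mul, add_zero]
      rcases eq_or_ne i j with rfl | hij
      · simp only [diagonal_apply_eq]
      · rw [diagonal_apply_ne _ hij, diagonal_apply_ne _ (Subtype.val_injective.ne hij)]
    rw [hdiag, det_diagonal]
    exact (Finset.prod_subtype S (fun _ => Iff.rfl) d).symm
  have hSc : (toSquareBlockProp M (· ∉ S)).det =
      (∏ i ∈ Sᶜ, x i) * (B.submatrix (Subtype.val : {i // i ∉ S} → n) Subtype.val).det := by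
    have hdiag_mul : toSquareBlockProp M (· ∉ S) =
        diagonal (fun i : {i // i ∉ S} => x i) * B.submatrix Subtype.val Subtype.val := by
      ext i j
      have hd_ij : diagonal d i j = 0 := by
        rw [diagonal_apply]
        split_ifs <;> simp [hd _ i.2]
      rw [toSquareBlockProp_def, of_apply, hM, hd_ij, zero_add, diagonal_mul, submatrix_apply]
    rw [hdiag_mul, det_mul, det_diagonal, Finset.prod_subtype Sᶜ (fun _ => Finset.mem_compl) x]
  rw [twoBlockTriangular_det' M (· ∈ S) hM_triangular, mul_assoc]
  -- `convert` reconciles the `Fintype` instances `Finset.Subtype.fintype` and `Subtype.fintype`.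
  convert congr_arg₂ (· * ·) hS hSc

end Matrix

/-- At an equilibrium `x*` with extinct set `𝒥`, the determinant of the Jacobian
`Df|_{x*} = diag(1 + Bx*) + diag(x*)·B` factorizes as
`∏_{i∈𝒥}(1 + Σ_ℓ B_{iℓ}x*_ℓ) · ∏_{i∉𝒥} x*_i · det(B⁺)`. -/
theorem stmt11 (s : ℕ) (B : Matrix (Fin s) (Fin s) ℝ) (𝒥 : Finset (Fin s))
    (xs : Fin s → ℝ)
    (hzero : ∀ j ∈ 𝒥, xs j = 0)
    (heq : ∀ j ∉ 𝒥, 1 + B.mulVec xs j = 0) :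
    (Matrix.diagonal (fun i => 1 + B.mulVec xs i) + Matrix.diagonal xs * B).det =
      (∏ i ∈ 𝒥, (1 + ∑ l, B i l * xs l)) * (∏ i ∈ 𝒥ᶜ, xs i) *
        (B.submatrix (Subtype.val : {i : Fin s // i ∉ 𝒥} → Fin s) Subtype.val).det :=
  det_diagonal_add_diagonal_mul_of_zero_on _ xs B 𝒥 hzero heq
end

section
/- Let B be a symmetric s×s real matrix, x* ∈ ℝˢ a strictly positive interior equilibrium of dx/dt = X(1 + Bx) (so 1 + Bx* = 0), and define V(x) = Σᵢ (xᵢ - x*ᵢ - x*ᵢ · log(xᵢ / x*ᵢ)) on the open positive orthant. Then along any solution x(t) in the positive orthant, d/dt V(x(t)) = (x(t) - x*)ᵀ B (x(t) - x*). In particular, if B is negative definite then V is nonincreasing along solutions and strictly decreasing away from x*. -/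
open Matrix BigOperators

/-! Since `∂V/∂xᵢ = (xᵢ - x*ᵢ) / xᵢ`, the factor `xᵢ` of the Lotka–Volterra field cancels and
`dV/dt = (x - x*) ⬝ᵥ (1 + Bx)`; the equilibrium condition `1 + Bx* = 0` turns `1 + Bx` into
`B (x - x*)`. -/

noncomputable def gohTerm (c y : ℝ) : ℝ := y - c - c * Real.log (y / c)

theorem HasDerivAt.gohTerm {f : ℝ → ℝ} {g c t : ℝ} (hc : c ≠ 0) (hft : f t ≠ 0)
    (hf : HasDerivAt f (f t * g) t) :
    HasDerivAt (fun t => gohTerm c (f t)) ((f t - c) * g) t := by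
  have hlog : HasDerivAt (fun t => Real.log (f t / c)) (f t * g / c / (f t / c)) t :=
    (hf.div_const c).log (div_ne_zero hft hc)
  refine ((hf.sub_const c).fun_sub (hlog.const_mul c)).congr_deriv ?_
  field_simp

theorem hasDerivAt_sum_gohTerm {ι : Type*} [Fintype ι] {x : ℝ → ι → ℝ} {xs r : ι → ℝ} {t : ℝ}
    (hxs : ∀ i, xs i ≠ 0) (hxt : ∀ i, x t i ≠ 0)
    (hx : HasDerivAt x (fun i => x t i * r i) t) :
    HasDerivAt (fun t => ∑ i, gohTerm (xs i) (x t i)) ((x t - xs) ⬝ᵥ r) t :=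
  HasDerivAt.fun_sum fun i _ => (hasDerivAt_pi.1 hx i).gohTerm (hxs i) (hxt i)

theorem one_add_mulVec_eq_mulVec_sub {ι : Type*} [Fintype ι] {B : Matrix ι ι ℝ} {xs : ι → ℝ}
    (heq : ∀ i, 1 + (B *ᵥ xs) i = 0) (y : ι → ℝ) :
    (fun i => 1 + (B *ᵥ y) i) = B *ᵥ (y - xs) := by
  ext i
  rw [mulVec_sub, Pi.sub_apply]
  linarith [heq i]

theorem dotProduct_mulVec_self_nonpos {ι : Type*} [Fintype ι] {B : Matrix ι ι ℝ}
    (hB : ∀ v : ι → ℝ, v ≠ 0 → v ⬝ᵥ B *ᵥ v < 0) (v : ι → ℝ) : v ⬝ᵥ B *ᵥ v ≤ 0 := by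
  rcases eq_or_ne v 0 with rfl | hv
  · simp
  · exact (hB v hv).le

theorem stmt12_general (s : ℕ) (B : Matrix (Fin s) (Fin s) ℝ)
    (xs : Fin s → ℝ) (hxs : ∀ i, 0 < xs i)
    (heq : ∀ i, 1 + B.mulVec xs i = 0)
    (V : (Fin s → ℝ) → ℝ)
    (hV : V = fun x => ∑ i, (x i - xs i - xs i * Real.log (x i / xs i)))
    (x : ℝ → Fin s → ℝ) (hpos : ∀ t i, 0 < x t i)
    (hx : ∀ t : ℝ, HasDerivAt x (fun i => x t i * (1 + B.mulVec (x t) i)) t) :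
    (∀ t : ℝ, HasDerivAt (fun t => V (x t))
      ((x t - xs) ⬝ᵥ B.mulVec (x t - xs)) t) ∧
    ((∀ v : Fin s → ℝ, v ≠ 0 → v ⬝ᵥ B.mulVec v < 0) →
      ∀ t : ℝ, (x t - xs) ⬝ᵥ B.mulVec (x t - xs) ≤ 0 ∧
        (x t ≠ xs → (x t - xs) ⬝ᵥ B.mulVec (x t - xs) < 0)) := by
  refine ⟨fun t => ?_, fun hB t => ⟨dotProduct_mulVec_self_nonpos hB _,
    fun hne => hB _ (sub_ne_zero.2 hne)⟩⟩
  subst hV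
  rw [← one_add_mulVec_eq_mulVec_sub heq]
  exact hasDerivAt_sum_gohTerm (fun i => (hxs i).ne') (fun i => (hpos t i).ne') (hx t)

/-- Along any positive solution of `dx/dt = X(1 + Bx)` with interior equilibrium `x*`,
the Goh function `V(x) = Σᵢ (xᵢ - x*ᵢ - x*ᵢ log(xᵢ/x*ᵢ))` satisfies
`d/dt V(x(t)) = (x(t)-x*)ᵀ B (x(t)-x*)`; if `B` is negative definite this derivative
is `≤ 0`, and `< 0` whenever `x(t) ≠ x*`. -/
theorem stmt12 (s : ℕ) (B : Matrix (Fin s) (Fin s) ℝ) (hBsymm : B.IsSymm)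
    (xs : Fin s → ℝ) (hxs : ∀ i, 0 < xs i)
    (heq : ∀ i, 1 + B.mulVec xs i = 0)
    (V : (Fin s → ℝ) → ℝ)
    (hV : V = fun x => ∑ i, (x i - xs i - xs i * Real.log (x i / xs i)))
    (x : ℝ → Fin s → ℝ) (hpos : ∀ t i, 0 < x t i)
    (hx : ∀ t : ℝ, HasDerivAt x (fun i => x t i * (1 + B.mulVec (x t) i)) t) :
    (∀ t : ℝ, HasDerivAt (fun t => V (x t))
      ((x t - xs) ⬝ᵥ B.mulVec (x t - xs)) t) ∧
    ((∀ v : Fin s → ℝ, v ≠ 0 → v ⬝ᵥ B.mulVec v < 0) →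
      ∀ t : ℝ, (x t - xs) ⬝ᵥ B.mulVec (x t - xs) ≤ 0 ∧
        (x t ≠ xs → (x t - xs) ⬝ᵥ B.mulVec (x t - xs) < 0)) :=
  stmt12_general s B xs hxs heq V hV x hpos hx
end

section
/- Let B be the s×s interaction matrix B = -(1-c)I - c·blockDiag(J_{n_p}, J_{n_a}) + m·𝔸, where 𝔸 = [[0, A],[Aᵀ, 0]] for a 0-1 matrix A of size n_p × n_a, 0 ≤ c < 1, and m ≥ 0. If m · √(d_P · d_A) < 1 - c, where d_P is the maximum row sum of A and d_A the maximum column sum of A, then B is negative definite. (The spectral norm of 𝔸 is at most √(d_P d_A), and -(1-c)I - c·blockDiag(J) has all eigenvalues ≤ -(1-c).) -/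
open Matrix BigOperators

set_option maxHeartbeats 1000000 in
/-- For the interaction matrix `B = -(1-c)I - c·blockDiag(J_{n_p}, J_{n_a}) + m·𝔸`
with `𝔸 = [[0, A],[Aᵀ, 0]]` for a 0-1 matrix `A`, if
`m·√(d_P·d_A) < 1 - c` where `d_P` (resp. `d_A`) is the maximum row (resp. column)
sum of `A`, then `B` is negative definite. -/
theorem stmt18 (np na : ℕ) (hnp : 0 < np) (hna : 0 < na)
    (c m : ℝ) (hc0 : 0 ≤ c) (hc1 : c < 1) (hm : 0 ≤ m)
    (A : Matrix (Fin np) (Fin na) ℝ)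
    (hA01 : ∀ i j, A i j = 0 ∨ A i j = 1)
    (dP dA : ℝ)
    (hdP : dP = Finset.univ.sup' (Finset.univ_nonempty_iff.mpr ⟨⟨0, hnp⟩⟩)
      (fun i : Fin np => ∑ j, A i j))
    (hdA : dA = Finset.univ.sup' (Finset.univ_nonempty_iff.mpr ⟨⟨0, hna⟩⟩)
      (fun j : Fin na => ∑ i, A i j))
    (hbound : m * Real.sqrt (dP * dA) < 1 - c)
    (B : Matrix (Fin np ⊕ Fin na) (Fin np ⊕ Fin na) ℝ)
    (hB : B = -((1 - c) • (1 : Matrix (Fin np ⊕ Fin na) (Fin np ⊕ Fin na) ℝ))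
        - c • Matrix.fromBlocks (Matrix.of fun _ _ => (1 : ℝ)) 0 0
            (Matrix.of fun _ _ => (1 : ℝ))
        + m • Matrix.fromBlocks 0 A Aᵀ 0) :
    ∀ x : Fin np ⊕ Fin na → ℝ, x ≠ 0 → x ⬝ᵥ B.mulVec x < 0 := by
  intro x hx
  set u : Fin np → ℝ := fun i => x (Sum.inl i) with hu
  set v : Fin na → ℝ := fun j => x (Sum.inr j) with hv
  -- quadratic form expansion
  have hcomm : (∑ j, ∑ i, A i j * u i * v j) = ∑ i, ∑ j, A i j * u i * v j :=
    Finset.sum_comm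
  have e1 : x ⬝ᵥ x = (∑ i, u i ^ 2) + ∑ j, v j ^ 2 := by
    simp [dotProduct, Fintype.sum_sum_type, sq, hu, hv]
  have e2 : x ⬝ᵥ ((Matrix.fromBlocks (Matrix.of fun _ _ => (1 : ℝ)) 0 0
      (Matrix.of fun _ _ => (1 : ℝ))) *ᵥ x) = (∑ i, u i)^2 + (∑ j, v j)^2 := by
    simp [dotProduct, mulVec, Fintype.sum_sum_type, fromBlocks, Finset.sum_mul, sq,
      Finset.mul_sum, hu, hv]
    congr 1 <;> exact Finset.sum_congr rfl fun _ _ => Finset.sum_congr rfl fun _ _ => mul_comm _ _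
  have e3 : x ⬝ᵥ ((Matrix.fromBlocks 0 A Aᵀ 0) *ᵥ x)
      = 2 * ∑ i, ∑ j, A i j * u i * v j := by
    rw [two_mul]
    nth_rewrite 2 [← hcomm]
    simp [dotProduct, mulVec, Fintype.sum_sum_type, fromBlocks, Finset.mul_sum,
      Finset.sum_add_distrib, hu, hv]
    congr 1
    · refine Finset.sum_congr rfl fun a _ => Finset.sum_congr rfl fun b _ => by ring
    · refine Finset.sum_congr rfl fun a _ => Finset.sum_congr rfl fun b _ => by ring
  have hQ : x ⬝ᵥ B.mulVec x =
      -(1-c) * ((∑ i, u i ^ 2) + ∑ j, v j ^ 2)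
      - c * ((∑ i, u i)^2 + (∑ j, v j)^2)
      + m * (2 * ∑ i, ∑ j, A i j * u i * v j) := by
    rw [hB, add_mulVec, sub_mulVec, neg_mulVec, smul_mulVec, one_mulVec,
      smul_mulVec, smul_mulVec, dotProduct_add, dotProduct_sub, dotProduct_neg,
      dotProduct_smul, dotProduct_smul, dotProduct_smul, e1, e2, e3]
    simp only [smul_eq_mul]
    ring
  set Su := ∑ i, u i ^ 2 with hSu
  set Sv := ∑ j, v j ^ 2 with hSv
  set S := ∑ i, ∑ j, A i j * u i * v j with hS
  have hSu0 : 0 ≤ Su := Finset.sum_nonneg fun _ _ => sq_nonneg _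
  have hSv0 : 0 ≤ Sv := Finset.sum_nonneg fun _ _ => sq_nonneg _
  -- positivity of Su + Sv
  have hP : 0 < Su + Sv := by
    have : ∃ p, x p ≠ 0 := by
      by_contra h
      push_neg at h
      exact hx (funext h)
    obtain ⟨p, hp⟩ := this
    cases p with
    | inl i =>
      have h1 : x (Sum.inl i) ^ 2 ≤ Su :=
        Finset.single_le_sum (f := fun i => u i ^ 2) (fun _ _ => sq_nonneg _) (Finset.mem_univ i)
      have h2 : 0 < x (Sum.inl i) ^ 2 :=
        lt_of_le_of_ne (sq_nonneg _) (Ne.symm (pow_ne_zero 2 hp))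
      linarith
    | inr j =>
      have h1 : x (Sum.inr j) ^ 2 ≤ Sv :=
        Finset.single_le_sum (f := fun j => v j ^ 2) (fun _ _ => sq_nonneg _) (Finset.mem_univ j)
      have h2 : 0 < x (Sum.inr j) ^ 2 :=
        lt_of_le_of_ne (sq_nonneg _) (Ne.symm (pow_ne_zero 2 hp))
      linarith
  -- entries nonneg and idempotent
  have hAnn : ∀ i j, 0 ≤ A i j := fun i j => by rcases hA01 i j with h | h <;> simp [h]
  have hAsq : ∀ i j, A i j ^ 2 = A i j := fun i j => by rcases hA01 i j with h | h <;> simp [h]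
  -- dP, dA bounds
  have hdP0 : 0 ≤ dP := by
    rw [hdP]
    exact le_trans (Finset.sum_nonneg fun j _ => hAnn _ j)
      (Finset.le_sup' (fun i : Fin np => ∑ j, A i j) (Finset.mem_univ (⟨0, hnp⟩ : Fin np)))
  have hdA0 : 0 ≤ dA := by
    rw [hdA]
    exact le_trans (Finset.sum_nonneg fun i _ => hAnn i _)
      (Finset.le_sup' (fun j : Fin na => ∑ i, A i j) (Finset.mem_univ (⟨0, hna⟩ : Fin na)))
  have hrow : ∀ i, (∑ j, A i j) ≤ dP := fun i => hdP ▸ Finset.le_sup' (fun i : Fin np => ∑ j, A i j) (Finset.mem_univ i)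
  have hcol : ∀ j, (∑ i, A i j) ≤ dA := fun j => hdA ▸ Finset.le_sup' (fun j : Fin na => ∑ i, A i j) (Finset.mem_univ j)
  -- Cauchy-Schwarz bound
  have hCS : S ^ 2 ≤ (dP * Su) * (dA * Sv) := by
    have key := Finset.sum_mul_sq_le_sq_mul_sq (Finset.univ : Finset (Fin np × Fin na))
      (fun p => A p.1 p.2 * u p.1) (fun p => A p.1 p.2 * v p.2)
    have hL : (∑ p : Fin np × Fin na, (A p.1 p.2 * u p.1) * (A p.1 p.2 * v p.2)) = S := by
      rw [hS, Fintype.sum_prod_type]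
      refine Finset.sum_congr rfl fun i _ => Finset.sum_congr rfl fun j _ => ?_
      linear_combination (u i * v j) * (hAsq i j)
    have h1 : (∑ p : Fin np × Fin na, (A p.1 p.2 * u p.1) ^ 2) ≤ dP * Su := by
      rw [Fintype.sum_prod_type]
      calc (∑ i, ∑ j, (A i j * u i)^2) = ∑ i, (∑ j, A i j) * u i ^ 2 := by
            refine Finset.sum_congr rfl fun i _ => ?_
            rw [Finset.sum_mul]
            refine Finset.sum_congr rfl fun j _ => ?_
            rw [mul_pow, hAsq]
        _ ≤ ∑ i, dP * u i ^ 2 := Finset.sum_le_sum fun i _ =>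
            mul_le_mul_of_nonneg_right (hrow i) (sq_nonneg _)
        _ = dP * Su := by rw [hSu, Finset.mul_sum]
    have h2 : (∑ p : Fin np × Fin na, (A p.1 p.2 * v p.2) ^ 2) ≤ dA * Sv := by
      rw [Fintype.sum_prod_type_right]
      calc (∑ j, ∑ i, (A i j * v j)^2) = ∑ j, (∑ i, A i j) * v j ^ 2 := by
            refine Finset.sum_congr rfl fun j _ => ?_
            rw [Finset.sum_mul]
            refine Finset.sum_congr rfl fun i _ => ?_
            rw [mul_pow, hAsq]
        _ ≤ ∑ j, dA * v j ^ 2 := Finset.sum_le_sum fun j _ =>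
            mul_le_mul_of_nonneg_right (hcol j) (sq_nonneg _)
        _ = dA * Sv := by rw [hSv, Finset.mul_sum]
    calc S ^ 2 = (∑ p : Fin np × Fin na, (A p.1 p.2 * u p.1) * (A p.1 p.2 * v p.2)) ^ 2 := by
          rw [hL]
      _ ≤ (∑ p : Fin np × Fin na, (A p.1 p.2 * u p.1) ^ 2) *
            (∑ p : Fin np × Fin na, (A p.1 p.2 * v p.2) ^ 2) := key
      _ ≤ (dP * Su) * (dA * Sv) := by
          refine mul_le_mul h1 h2 (Finset.sum_nonneg fun _ _ => sq_nonneg _) ?_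
          exact le_trans (Finset.sum_nonneg fun _ _ => sq_nonneg _) h1
  -- S ≤ √(dP dA) √Su √Sv
  have hSb : S ≤ Real.sqrt (dP * dA) * (Real.sqrt Su * Real.sqrt Sv) := by
    have h1 : S ≤ Real.sqrt ((dP * Su) * (dA * Sv)) := by
      have := Real.sqrt_le_sqrt hCS
      rw [Real.sqrt_sq_eq_abs] at this
      exact (le_abs_self S).trans this
    have h2 : Real.sqrt ((dP * Su) * (dA * Sv))
        = Real.sqrt (dP * dA) * (Real.sqrt Su * Real.sqrt Sv) := by
      rw [show (dP * Su) * (dA * Sv) = (dP * dA) * (Su * Sv) by ring,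
        Real.sqrt_mul (by positivity), Real.sqrt_mul hSu0]
    linarith [h2 ▸ h1]
  -- AM-GM
  have hAM : 2 * (Real.sqrt Su * Real.sqrt Sv) ≤ Su + Sv := by
    nlinarith [sq_nonneg (Real.sqrt Su - Real.sqrt Sv), Real.sq_sqrt hSu0, Real.sq_sqrt hSv0]
  -- combine
  have hmain : m * (2 * S) < (1 - c) * (Su + Sv) := by
    have hsq : (0:ℝ) ≤ Real.sqrt (dP * dA) := Real.sqrt_nonneg _
    have c1 : m * (2 * S) ≤ m * (2 * (Real.sqrt (dP * dA) * (Real.sqrt Su * Real.sqrt Sv))) := by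
      apply mul_le_mul_of_nonneg_left _ hm
      linarith
    have c2 : 2 * (Real.sqrt (dP * dA) * (Real.sqrt Su * Real.sqrt Sv))
        ≤ Real.sqrt (dP * dA) * (Su + Sv) := by
      have := mul_le_mul_of_nonneg_left hAM hsq
      linarith [this]
    have c3 : m * (Real.sqrt (dP * dA) * (Su + Sv)) < (1 - c) * (Su + Sv) := by
      rw [← mul_assoc]
      exact mul_lt_mul_of_pos_right hbound hP
    calc m * (2 * S) ≤ m * (2 * (Real.sqrt (dP * dA) * (Real.sqrt Su * Real.sqrt Sv))) := c1
      _ ≤ m * (Real.sqrt (dP * dA) * (Su + Sv)) := mul_le_mul_of_nonneg_left c2 hm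
      _ < (1 - c) * (Su + Sv) := c3
  have hT : 0 ≤ (∑ i, u i)^2 + (∑ j, v j)^2 := by positivity
  rw [hQ]
  linarith [mul_nonneg hc0 hT, hmain]
end
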